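/- arXiv:2502.06671 — 2 statements merged into one kernel-verified Lean document; each statement's English description precedes it below -/
import Mathlib

section
/- For matrices X, Y, ΔX, ΔY ∈ ℝ^{n×r}: ‖ΔX Yᵀ + X ΔYᵀ‖_F² ≤ (‖X‖² + ‖Y‖²)(‖ΔX‖_F² + ‖ΔY‖_F²), where ‖·‖ is the spectral norm. -/
open Matrix

/-- Spectral norm (operator 2-norm) of a real matrix. -/
noncomputable def specNorm {m n : Type*} [Fintype m] [Fintype n] [DecidableEq n]
    (A : Matrix m n ℝ) : ℝ :=
  ‖LinearMap.toContinuousLinearMap (Matrix.toEuclideanLin A)‖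

/-- Frobenius norm of a real matrix. -/
noncomputable def frobNorm {m n : Type*} [Fintype m] [Fintype n] (A : Matrix m n ℝ) : ℝ :=
  Real.sqrt (∑ i, ∑ j, (A i j) ^ 2)

/-! Since `A` acts on `B` column by column, `‖A B‖_F ≤ ‖A‖ ‖B‖_F`. Applied to `X ΔYᵀ` and to
`(ΔX Yᵀ)ᵀ = Y ΔXᵀ`, together with the triangle inequality, this gives
`‖ΔX Yᵀ + X ΔYᵀ‖_F ≤ ‖Y‖ ‖ΔX‖_F + ‖X‖ ‖ΔY‖_F`; squaring finishes with Cauchy–Schwarz in `ℝ²`. -/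

section

variable {l m n : Type*} [Fintype l] [Fintype m] [Fintype n]

lemma frobNorm_nonneg (A : Matrix m n ℝ) : 0 ≤ frobNorm A :=
  Real.sqrt_nonneg _

lemma frobNorm_sq (A : Matrix m n ℝ) : frobNorm A ^ 2 = ∑ i, ∑ j, A i j ^ 2 :=
  Real.sq_sqrt (by positivity)

lemma frobNorm_transpose (A : Matrix m n ℝ) : frobNorm Aᵀ = frobNorm A := by
  rw [frobNorm, frobNorm, Finset.sum_comm]
  rfl

attribute [local instance] Matrix.frobeniusNormedAddCommGroup in
lemma frobNorm_eq_norm (A : Matrix m n ℝ) : frobNorm A = ‖A‖ := by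
  rw [frobNorm, Matrix.frobenius_norm_def, Real.sqrt_eq_rpow]
  simp only [Real.norm_eq_abs, Real.rpow_two, sq_abs]

attribute [local instance] Matrix.frobeniusNormedAddCommGroup in
lemma frobNorm_add_le (A B : Matrix m n ℝ) : frobNorm (A + B) ≤ frobNorm A + frobNorm B := by
  simpa only [frobNorm_eq_norm] using norm_add_le A B

lemma sum_sq_mulVec_le [DecidableEq n] (A : Matrix m n ℝ) (v : n → ℝ) :
    ∑ i, (A *ᵥ v) i ^ 2 ≤ specNorm A ^ 2 * ∑ k, v k ^ 2 := by
  have h := (LinearMap.toContinuousLinearMap (toEuclideanLin A)).le_opNorm (WithLp.toLp 2 v)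
  have hsq := pow_le_pow_left₀ (norm_nonneg _) h 2
  rwa [mul_pow, EuclideanSpace.real_norm_sq_eq, EuclideanSpace.real_norm_sq_eq] at hsq

lemma frobNorm_mul_le [DecidableEq m] (A : Matrix l m ℝ) (B : Matrix m n ℝ) :
    frobNorm (A * B) ≤ specNorm A * frobNorm B := by
  have hcol : ∀ j, ∑ i, (A * B) i j ^ 2 ≤ specNorm A ^ 2 * ∑ k, B k j ^ 2 := fun j =>
    sum_sq_mulVec_le A (fun k => B k j)
  have hsq : frobNorm (A * B) ^ 2 ≤ (specNorm A * frobNorm B) ^ 2 := by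
    rw [mul_pow, frobNorm_sq, frobNorm_sq, Finset.sum_comm,
      Finset.sum_comm (f := fun k j => B k j ^ 2), Finset.mul_sum]
    exact Finset.sum_le_sum fun j _ => hcol j
  exact (pow_le_pow_iff_left₀ (frobNorm_nonneg _)
    (mul_nonneg (norm_nonneg _) (frobNorm_nonneg _)) two_ne_zero).1 hsq

end

lemma sq_mul_add_mul_le (a b c d : ℝ) : (a * b + c * d) ^ 2 ≤ (a ^ 2 + c ^ 2) * (b ^ 2 + d ^ 2) := by
  nlinarith [sq_nonneg (a * d - b * c)]

/-- ‖ΔX Yᵀ + X ΔYᵀ‖_F² ≤ (‖X‖² + ‖Y‖²)(‖ΔX‖_F² + ‖ΔY‖_F²). -/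
theorem frob_cross_term_bound (n r : ℕ) (X Y ΔX ΔY : Matrix (Fin n) (Fin r) ℝ) :
    frobNorm (ΔX * Yᵀ + X * ΔYᵀ) ^ 2 ≤
      (specNorm X ^ 2 + specNorm Y ^ 2) * (frobNorm ΔX ^ 2 + frobNorm ΔY ^ 2) := by
  have h₁ : frobNorm (ΔX * Yᵀ) ≤ specNorm Y * frobNorm ΔX := by
    rw [← frobNorm_transpose, transpose_mul, transpose_transpose, ← frobNorm_transpose ΔX]
    exact frobNorm_mul_le Y ΔXᵀ
  have h₂ : frobNorm (X * ΔYᵀ) ≤ specNorm X * frobNorm ΔY := by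
    rw [← frobNorm_transpose ΔY]
    exact frobNorm_mul_le X ΔYᵀ
  have h : frobNorm (ΔX * Yᵀ + X * ΔYᵀ) ≤ specNorm Y * frobNorm ΔX + specNorm X * frobNorm ΔY :=
    (frobNorm_add_le _ _).trans (add_le_add h₁ h₂)
  calc frobNorm (ΔX * Yᵀ + X * ΔYᵀ) ^ 2
      ≤ (specNorm Y * frobNorm ΔX + specNorm X * frobNorm ΔY) ^ 2 :=
        pow_le_pow_left₀ (frobNorm_nonneg _) h 2
    _ ≤ (specNorm Y ^ 2 + specNorm X ^ 2) * (frobNorm ΔX ^ 2 + frobNorm ΔY ^ 2) :=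
        sq_mul_add_mul_le _ _ _ _
    _ = (specNorm X ^ 2 + specNorm Y ^ 2) * (frobNorm ΔX ^ 2 + frobNorm ΔY ^ 2) := by ring
end

section
/- For matrices X, Y ∈ ℝ^{n×r} and Δ_X, Δ_Y ∈ ℝ^{n×r}, the identity ‖Δ_X Yᵀ + X Δ_Yᵀ‖_F² + (1/4)‖Δ_XᵀX + XᵀΔ_X - Δ_YᵀY - YᵀΔ_Y‖_F² = ‖Δ_X Yᵀ‖_F² + ‖X Δ_Yᵀ‖_F² + (1/2)‖Δ_XᵀX - Δ_YᵀY‖_F² + (1/2)⟨XᵀΔ_X + YᵀΔ_Y, Δ_XᵀX + Δ_YᵀY⟩ holds. -/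
open Matrix

/-- Frobenius inner product ⟨A, B⟩ = Tr(AᵀB) of real matrices. -/
def frobInner {m n : Type*} [Fintype m] [Fintype n] (A B : Matrix m n ℝ) : ℝ :=
  ∑ i, ∑ j, A i j * B i j

lemma frobInner_eq_trace {m n : Type*} [Fintype m] [Fintype n] (A B : Matrix m n ℝ) :
    frobInner A B = trace (Aᵀ * B) := by
  simp only [frobInner, trace, diag, Matrix.mul_apply, transpose_apply]
  rw [Finset.sum_comm]

lemma frobNorm_sq_eq_trace {m n : Type*} [Fintype m] [Fintype n] (A : Matrix m n ℝ) :
    frobNorm A ^ 2 = trace (Aᵀ * A) := by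
  rw [frobNorm, Real.sq_sqrt (by positivity), ← frobInner_eq_trace]
  simp [frobInner, sq]

lemma trace_tp4 {n r : Type*} [Fintype n] [Fintype r] (A B C D : Matrix n r ℝ) :
    trace (Aᵀ * B * (Cᵀ * D)) = trace (Dᵀ * C * (Bᵀ * A)) := by
  rw [← trace_transpose]; simp only [transpose_mul, transpose_transpose]

lemma trace_cyc4 {n r : Type*} [Fintype n] [Fintype r] (A B C D : Matrix n r ℝ) :
    trace (A * Bᵀ * (C * Dᵀ)) = trace (Bᵀ * C * (Dᵀ * A)) := by
  rw [Matrix.trace_mul_cycle, Matrix.trace_mul_comm]; simp only [Matrix.mul_assoc]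

/-- The identity
‖ΔX Yᵀ + X ΔYᵀ‖_F² + (1/4)‖ΔXᵀX + XᵀΔX - ΔYᵀY - YᵀΔY‖_F² =
‖ΔX Yᵀ‖_F² + ‖X ΔYᵀ‖_F² + (1/2)‖ΔXᵀX - ΔYᵀY‖_F²
  + (1/2)⟨XᵀΔX + YᵀΔY, ΔXᵀX + ΔYᵀY⟩. -/
theorem frob_balancing_identity (n r : ℕ) (X Y ΔX ΔY : Matrix (Fin n) (Fin r) ℝ) :
    frobNorm (ΔX * Yᵀ + X * ΔYᵀ) ^ 2 +
        (1 / 4) * frobNorm (ΔXᵀ * X + Xᵀ * ΔX - ΔYᵀ * Y - Yᵀ * ΔY) ^ 2 =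
      frobNorm (ΔX * Yᵀ) ^ 2 + frobNorm (X * ΔYᵀ) ^ 2 +
        (1 / 2) * frobNorm (ΔXᵀ * X - ΔYᵀ * Y) ^ 2 +
        (1 / 2) * frobInner (Xᵀ * ΔX + Yᵀ * ΔY) (ΔXᵀ * X + ΔYᵀ * Y) := by
  simp only [frobNorm_sq_eq_trace, frobInner_eq_trace, transpose_add, transpose_sub,
    transpose_mul, transpose_transpose, Matrix.add_mul, Matrix.mul_add, Matrix.sub_mul,
    Matrix.mul_sub, trace_add, trace_sub, Matrix.mul_assoc]
  have h1 : trace (ΔY * (Xᵀ * (ΔX * Yᵀ))) = trace (ΔXᵀ * (X * (ΔYᵀ * Y))) :=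
    by simpa only [Matrix.mul_assoc] using
      (trace_cyc4 ΔY X ΔX Y).trans ((trace_tp4 X ΔX Y ΔY).trans (trace_mul_comm (ΔYᵀ * Y) (ΔXᵀ * X)))
  have h2 : trace (Y * (ΔXᵀ * (X * ΔYᵀ))) = trace (ΔXᵀ * (X * (ΔYᵀ * Y))) :=
    by simpa only [Matrix.mul_assoc] using trace_cyc4 Y ΔX X ΔY
  have h3 : trace (ΔXᵀ * (X * (Xᵀ * ΔX))) = trace (Xᵀ * (ΔX * (ΔXᵀ * X))) :=
    by simpa only [Matrix.mul_assoc] using trace_mul_comm (ΔXᵀ * X) (Xᵀ * ΔX)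
  have h4 : trace (Xᵀ * (ΔX * (Xᵀ * ΔX))) = trace (ΔXᵀ * (X * (ΔXᵀ * X))) :=
    by simpa only [Matrix.mul_assoc] using trace_tp4 X ΔX X ΔX
  have h6 : trace (ΔYᵀ * (Y * (ΔXᵀ * X))) = trace (ΔXᵀ * (X * (ΔYᵀ * Y))) :=
    by simpa only [Matrix.mul_assoc] using trace_mul_comm (ΔYᵀ * Y) (ΔXᵀ * X)
  have h7 : trace (Yᵀ * (ΔY * (Xᵀ * ΔX))) = trace (ΔXᵀ * (X * (ΔYᵀ * Y))) :=
    by simpa only [Matrix.mul_assoc] using trace_tp4 Y ΔY X ΔX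
  have h8 : trace (ΔYᵀ * (Y * (Xᵀ * ΔX))) = trace (Yᵀ * (ΔY * (ΔXᵀ * X))) :=
    by simpa only [Matrix.mul_assoc] using
      (trace_tp4 ΔY Y X ΔX).trans (trace_mul_comm (ΔXᵀ * X) (Yᵀ * ΔY))
  have h9 : trace (Xᵀ * (ΔX * (ΔYᵀ * Y))) = trace (Yᵀ * (ΔY * (ΔXᵀ * X))) :=
    by simpa only [Matrix.mul_assoc] using trace_tp4 X ΔX ΔY Y
  have h10 : trace (Xᵀ * (ΔX * (Yᵀ * ΔY))) = trace (ΔXᵀ * (X * (ΔYᵀ * Y))) :=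
    by simpa only [Matrix.mul_assoc] using
      (trace_tp4 X ΔX Y ΔY).trans (trace_mul_comm (ΔYᵀ * Y) (ΔXᵀ * X))
  have h11 : trace (ΔXᵀ * (X * (Yᵀ * ΔY))) = trace (Yᵀ * (ΔY * (ΔXᵀ * X))) :=
    by simpa only [Matrix.mul_assoc] using trace_mul_comm (ΔXᵀ * X) (Yᵀ * ΔY)
  have h12 : trace (Yᵀ * (ΔY * (Yᵀ * ΔY))) = trace (ΔYᵀ * (Y * (ΔYᵀ * Y))) :=
    by simpa only [Matrix.mul_assoc] using trace_tp4 Y ΔY Y ΔY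
  have h13 : trace (ΔYᵀ * (Y * (Yᵀ * ΔY))) = trace (Yᵀ * (ΔY * (ΔYᵀ * Y))) :=
    by simpa only [Matrix.mul_assoc] using trace_mul_comm (ΔYᵀ * Y) (Yᵀ * ΔY)
  rw [h1, h2, h3, h4, h6, h7, h8, h9, h10, h11, h12, h13]
  ring
end
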